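/- arXiv:2306.05719 — 9 statements merged into one kernel-verified Lean document; each statement's English description precedes it below -/
import Mathlib

section
/- Let n ≥ 2 be an integer. Set G = y(x·y^(n-1) + z^n) and H = z(x·y^(n-1) + z^n) + y^(n+1) in ℂ[x,y,z] (both homogeneous of degree n+1), and consider the 1-form Ω = G·dH − H·dG, whose coefficients are A = G·∂H/∂x − H·∂G/∂x, B = G·∂H/∂y − H·∂G/∂y, C = G·∂H/∂z − H·∂G/∂z. Then for every (x,y,z) ∈ ℂ³ \ {0} with A(x,y,z) = B(x,y,z) = C(x,y,z) = 0, one has y = 0 and z = 0. In other words, the foliation on ℂP² associated to the pencil {αG − βH} has (1:0:0) as its unique singular point. -/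
open MvPolynomial

/-- The foliation on ℂP² associated to the pencil {αG − βH}, with
`G = y(x·y^(n-1) + z^n)` and `H = z(x·y^(n-1) + z^n) + y^(n+1)`,
has `(1:0:0)` as its unique singular point. -/

theorem stmt_0 (n : ℕ) (hn : 2 ≤ n)
    (G H A B C : MvPolynomial (Fin 3) ℂ)
    (hG : G = X 1 * (X 0 * X 1 ^ (n - 1) + X 2 ^ n))
    (hH : H = X 2 * (X 0 * X 1 ^ (n - 1) + X 2 ^ n) + X 1 ^ (n + 1))
    (hA : A = G * pderiv 0 H - H * pderiv 0 G)
    (hB : B = G * pderiv 1 H - H * pderiv 1 G)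
    (hC : C = G * pderiv 2 H - H * pderiv 2 G) :
    ∀ v : Fin 3 → ℂ, v ≠ 0 →
      eval v A = 0 → eval v B = 0 → eval v C = 0 →
      v 1 = 0 ∧ v 2 = 0 := by
  obtain ⟨m, rfl⟩ : ∃ m, n = m + 2 := ⟨n - 2, by omega⟩
  intro v hv ha hb hc
  subst hG hH hA hB hC
  simp only [show m + 2 - 1 = m + 1 from rfl, pderiv_mul, pderiv_pow, pderiv_X,
    map_add, map_sub, map_mul, map_pow, eval_X, eval_mul, eval_add, eval_pow,
    Pi.single_eq_same, Pi.single_eq_of_ne (by decide : (1:Fin 3) ≠ 0),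
    Pi.single_eq_of_ne (by decide : (2:Fin 3) ≠ 0),
    Pi.single_eq_of_ne (by decide : (0:Fin 3) ≠ 1),
    Pi.single_eq_of_ne (by decide : (2:Fin 3) ≠ 1),
    Pi.single_eq_of_ne (by decide : (0:Fin 3) ≠ 2),
    Pi.single_eq_of_ne (by decide : (1:Fin 3) ≠ 2),
    mul_one, mul_zero, zero_mul, add_zero, zero_add, map_natCast, eval_C, map_one,
    Nat.add_sub_cancel] at ha hb hc
  have hy : v 1 = 0 := by
    have : v 1 ^ (2 * m + 5) = 0 := by linear_combination -ha
    exact pow_eq_zero_iff (by omega) |>.mp this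
  refine ⟨hy, ?_⟩
  rw [hy] at hb
  simp only [zero_mul, mul_zero, zero_add, add_zero,
    zero_pow (by omega : m + 2 + 1 ≠ 0), one_mul] at hb
  have : v 2 ^ (2 * m + 5) = 0 := by linear_combination -hb
  exact pow_eq_zero_iff (by omega) |>.mp this
end

section
/- Let n ≥ 2 be an integer. Set G = y(x·y^(n-1) + z^n) and H = z(x·y^(n-1) + z^n) + y^(n+1) in ℂ[x,y,z], and let A = G·∂H/∂x − H·∂G/∂x, B = G·∂H/∂y − H·∂G/∂y, C = G·∂H/∂z − H·∂G/∂z be the coefficients of the 1-form G·dH − H·dG. Then any polynomial D ∈ ℂ[x,y,z] dividing A, B and C simultaneously is a nonzero constant. (Consequently the associated foliation has degree exactly 2n and the pencil {αG − βH} has no non-reduced fibers.) -/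
open MvPolynomial

noncomputable def sub1 : MvPolynomial (Fin 3) ℂ →ₐ[ℂ] MvPolynomial (Fin 3) ℂ :=
  aeval (fun i => if i = 1 then 0 else X i)

lemma sub1_dvd (p : MvPolynomial (Fin 3) ℂ) : X 1 ∣ p - sub1 p := by
  induction p using MvPolynomial.induction_on with
  | C a => simp [sub1]
  | add p q hp hq =>
      have := dvd_add hp hq
      rwa [show p - sub1 p + (q - sub1 q) = p + q - sub1 (p + q) by rw [map_add]; ring] at this
  | mul_X p i hp =>
      by_cases hi : i = 1
      · subst hi
        rw [show sub1 (p * X 1) = 0 by simp [sub1], sub_zero]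
        exact Dvd.intro p (mul_comm _ _)
      · simp only [sub1, map_mul, aeval_X, if_neg hi]
        have : p * X i - sub1 p * X i = (p - sub1 p) * X i := by ring
        rw [show (aeval fun i => if i = 1 then 0 else X i : _) p = sub1 p from rfl, this]
        exact hp.mul_right _

lemma X1_dvd_iff (p : MvPolynomial (Fin 3) ℂ) : X 1 ∣ p ↔ sub1 p = 0 := by
  constructor
  · rintro ⟨q, rfl⟩
    simp [sub1]
  · intro h
    have := sub1_dvd p
    rwa [h, sub_zero] at this

lemma prime_X1 : Prime (X 1 : MvPolynomial (Fin 3) ℂ) := by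
  refine ⟨X_ne_zero _, ?_, ?_⟩
  · intro h
    have : (X 1 : MvPolynomial (Fin 3) ℂ) ∣ 1 := h.dvd
    rw [X1_dvd_iff] at this
    simp at this
  · intro a b hab
    rw [X1_dvd_iff, map_mul] at hab
    rcases mul_eq_zero.mp hab with h | h
    · exact Or.inl ((X1_dvd_iff a).mpr h)
    · exact Or.inr ((X1_dvd_iff b).mpr h)

lemma isUnit_mv : ∀ (k : ℕ) (p : MvPolynomial (Fin k) ℂ), IsUnit p → ∃ c : ℂ, p = C c := by
  intro k
  induction k with
  | zero => intro p _; exact ⟨coeff 0 p, eq_C_of_isEmpty p⟩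
  | succ k ih =>
      intro p hp
      have hq : IsUnit (finSuccEquiv ℂ k p) := hp.map _
      obtain ⟨r, hr, hrp⟩ := Polynomial.isUnit_iff.mp hq
      obtain ⟨c, rfl⟩ := ih r hr
      refine ⟨c, ?_⟩
      have : p = (finSuccEquiv ℂ k).symm (Polynomial.C (C c)) := by
        rw [hrp, AlgEquiv.symm_apply_apply]
      rw [this]
      have : (Polynomial.C (C c) : Polynomial (MvPolynomial (Fin k) ℂ)) =
          algebraMap ℂ _ c := rfl
      rw [this, AlgEquiv.commutes]
      rfl

/-- For the pencil with `G = y(x·y^(n-1) + z^n)`, `H = z(x·y^(n-1) + z^n) + y^(n+1)`,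
any common divisor of the three coefficients of `G·dH − H·dG` is a nonzero constant. -/
theorem stmt_1 (n : ℕ) (hn : 2 ≤ n)
    (G H A B C : MvPolynomial (Fin 3) ℂ)
    (hG : G = X 1 * (X 0 * X 1 ^ (n - 1) + X 2 ^ n))
    (hH : H = X 2 * (X 0 * X 1 ^ (n - 1) + X 2 ^ n) + X 1 ^ (n + 1))
    (hA : A = G * pderiv 0 H - H * pderiv 0 G)
    (hB : B = G * pderiv 1 H - H * pderiv 1 G)
    (hC : C = G * pderiv 2 H - H * pderiv 2 G) :
    ∀ D : MvPolynomial (Fin 3) ℂ, D ∣ A → D ∣ B → D ∣ C →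
      ∃ c : ℂ, c ≠ 0 ∧ D = MvPolynomial.C c := by
  intro D hDA hDB _
  obtain ⟨m, rfl⟩ : ∃ m, n = m + 2 := ⟨n - 2, by omega⟩
  have hn1 : m + 2 - 1 = m + 1 := by omega
  rw [hn1] at hG hH
  -- A = -(X 1)^(2m+5)
  have hA' : A = -(X 1 ^ (2 * m + 5)) := by
    subst hG hH hA
    simp only [pderiv_mul, pderiv_pow, map_add, pderiv_X_self,
      pderiv_X_of_ne (show (1 : Fin 3) ≠ 0 by decide),
      pderiv_X_of_ne (show (2 : Fin 3) ≠ 0 by decide)]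
    ring
  -- X 1 does not divide B
  have hX1B : ¬ (X 1 : MvPolynomial (Fin 3) ℂ) ∣ B := by
    intro ⟨Q, hQ⟩
    have hev : eval (fun i => if i = 2 then (1 : ℂ) else 0) B = -1 := by
      subst hG hH hB
      simp only [pderiv_mul, pderiv_pow, map_add, pderiv_X_self,
        pderiv_X_of_ne (show (0 : Fin 3) ≠ 1 by decide),
        pderiv_X_of_ne (show (2 : Fin 3) ≠ 1 by decide)]
      simp [eval_X, eval_pow, mul_comm]
    rw [hQ] at hev
    simp only [map_mul, eval_X] at hev
    simp at hev
  -- D divides a power of the prime X 1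
  have hDpow : D ∣ (X 1 : MvPolynomial (Fin 3) ℂ) ^ (2 * m + 5) := by
    rw [hA'] at hDA
    exact (dvd_neg).mp hDA
  obtain ⟨i, hi, hassoc⟩ := (dvd_prime_pow prime_X1 _).mp hDpow
  rcases Nat.eq_zero_or_pos i with hi0 | hipos
  · subst hi0
    rw [pow_zero] at hassoc
    have hu : IsUnit D := hassoc.symm.isUnit isUnit_one
    obtain ⟨c, rfl⟩ := isUnit_mv 3 D hu
    refine ⟨c, ?_, rfl⟩
    rintro rfl
    simp only [map_zero] at hu
    exact not_isUnit_zero hu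
  · exfalso
    apply hX1B
    have hXD : (X 1 : MvPolynomial (Fin 3) ℂ) ∣ D := by
      obtain ⟨u, hu⟩ := hassoc.symm
      rw [← hu]
      exact (dvd_pow_self (X 1 : MvPolynomial (Fin 3) ℂ) (Nat.pos_iff_ne_zero.mp hipos)).mul_right u
    exact hXD.trans hDB
end

section
/- Let n ≥ 2 be an integer. In the affine chart x = 1, set f = y(y^(n-1) + z^n) and g = z(y^(n-1) + z^n) + y^(n+1) in ℂ[y,z], and let A = g·∂f/∂y − f·∂g/∂y and B = g·∂f/∂z − f·∂g/∂z be the coefficients of the local 1-form ω = A dy + B dz defining the foliation. Then min(ord(A), ord(B)) = 2n − 1, where ord denotes the smallest total degree of a monomial appearing with nonzero coefficient; that is, the multiplicity of the singular point at the origin is 2n − 1. -/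
open MvPolynomial

/-- The order (smallest total degree of a monomial with nonzero coefficient)
of a polynomial in two variables. -/
noncomputable def polyOrd (p : MvPolynomial (Fin 2) ℂ) : ℕ :=
  sInf {k | ∃ d ∈ p.support, (∑ i, d i) = k}

noncomputable def fe (a b : ℕ) : Fin 2 →₀ ℕ := Finsupp.single 0 a + Finsupp.single 1 b

lemma fe_sum (a b : ℕ) : ∑ i, fe a b i = a + b := by
  simp [fe, Fin.sum_univ_two, Finsupp.single_apply]

lemma fe_inj {a b c d : ℕ} : fe a b = fe c d ↔ a = c ∧ b = d := by
  constructor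
  · intro h
    constructor
    · have := DFunLike.congr_fun h 0
      simpa [fe, Finsupp.single_apply] using this
    · have := DFunLike.congr_fun h 1
      simpa [fe, Finsupp.single_apply] using this
  · rintro ⟨rfl, rfl⟩; rfl

lemma mono_eq (a b : ℕ) (c : ℂ) :
    (monomial (fe a b) c : MvPolynomial (Fin 2) ℂ) = C c * X 0 ^ a * X 1 ^ b := by
  rw [X_pow_eq_monomial, X_pow_eq_monomial, C_apply, monomial_mul, monomial_mul]
  simp [fe, mul_comm]

lemma polyOrd_eq (p : MvPolynomial (Fin 2) ℂ) (k : ℕ)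
    (h1 : ∃ d, coeff d p ≠ 0 ∧ ∑ i, d i = k)
    (h2 : ∀ d, coeff d p ≠ 0 → k ≤ ∑ i, d i) : polyOrd p = k := by
  obtain ⟨d, hd, hdk⟩ := h1
  unfold polyOrd
  apply le_antisymm
  · have hk : k ∈ {m : ℕ | ∃ d ∈ p.support, (∑ i, d i) = m} := by
      exact ⟨d, mem_support_iff.2 hd, hdk⟩
    exact Nat.sInf_le hk
  · have hne : {m : ℕ | ∃ d ∈ p.support, (∑ i, d i) = m}.Nonempty := by
      exact ⟨k, d, mem_support_iff.2 hd, hdk⟩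
    apply le_csInf hne
    rintro b ⟨e, he, rfl⟩
    exact h2 e (mem_support_iff.1 he)

/-- In the chart `x = 1`, with `f = y(y^(n-1) + z^n)`, `g = z(y^(n-1) + z^n) + y^(n+1)`,
the multiplicity at the origin of the foliation `A dy + B dz`, where
`A = g·f_y − f·g_y` and `B = g·f_z − f·g_z`, equals `2n − 1`. -/
theorem stmt_2 (n : ℕ) (hn : 2 ≤ n)
    (f g A B : MvPolynomial (Fin 2) ℂ)
    (hf : f = X 0 * (X 0 ^ (n - 1) + X 1 ^ n))
    (hg : g = X 1 * (X 0 ^ (n - 1) + X 1 ^ n) + X 0 ^ (n + 1))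
    (hA : A = g * pderiv 0 f - f * pderiv 0 g)
    (hB : B = g * pderiv 1 f - f * pderiv 1 g) :
    min (polyOrd A) (polyOrd B) = 2 * n - 1 := by
  obtain ⟨k, rfl⟩ : ∃ k, n = k + 2 := ⟨n - 2, by omega⟩
  have e1 : k + 2 - 1 = k + 1 := rfl
  rw [e1] at hf hg
  have hB' : B = monomial (fe (k+4) (k+1)) ((k:ℂ)+2) + monomial (fe (2*k+3) 0) (-1)
      + monomial (fe (k+2) (k+2)) (-2) + monomial (fe 1 (2*k+4)) (-1) := by
    subst hf hg hB
    simp only [mono_eq, map_neg, map_ofNat]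
    simp [pderiv_mul, pderiv_pow, pderiv_X_self, pderiv_X_of_ne, map_ofNat]
    ring
  have hA' : A = monomial (fe (2*k+2) 1) 1 + monomial (fe (k+1) (k+3)) 2
      + monomial (fe 0 (2*k+5)) 1 + monomial (fe (2*k+4) 0) (-1)
      + monomial (fe (k+3) (k+2)) (-((k:ℂ)+2)) := by
    subst hf hg hA
    simp only [mono_eq, map_neg, map_ofNat, map_one, map_add]
    simp [pderiv_mul, pderiv_pow, pderiv_X_self, pderiv_X_of_ne, map_ofNat]
    ring
  have hordB : polyOrd B = 2 * k + 3 := by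
    apply polyOrd_eq
    · refine ⟨fe (2*k+3) 0, ?_, by rw [fe_sum]⟩
      have n1 : fe (k+4) (k+1) ≠ fe (2*k+3) 0 := fun h => by
        obtain ⟨h1, h2⟩ := fe_inj.mp h; omega
      have n3 : fe (k+2) (k+2) ≠ fe (2*k+3) 0 := fun h => by
        obtain ⟨h1, h2⟩ := fe_inj.mp h; omega
      have n4 : fe 1 (2*k+4) ≠ fe (2*k+3) 0 := fun h => by
        obtain ⟨h1, h2⟩ := fe_inj.mp h; omega
      rw [hB']
      simp [coeff_add, coeff_monomial, n1, n3, n4]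
    · intro d hd
      by_contra hlt
      push_neg at hlt
      apply hd
      have key : ∀ a b : ℕ, 2 * k + 3 ≤ a + b → fe a b ≠ d := by
        intro a b hab h
        rw [← h, fe_sum] at hlt
        omega
      have n1 := key (k+4) (k+1) (by omega)
      have n2 := key (2*k+3) 0 (by omega)
      have n3 := key (k+2) (k+2) (by omega)
      have n4 := key 1 (2*k+4) (by omega)
      rw [hB']
      simp [coeff_add, coeff_monomial, n1, n2, n3, n4]
  have hordA : polyOrd A = 2 * k + 3 := by
    apply polyOrd_eq
    · refine ⟨fe (2*k+2) 1, ?_, by rw [fe_sum]⟩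
      have n2 : fe (k+1) (k+3) ≠ fe (2*k+2) 1 := fun h => by
        obtain ⟨h1, h2⟩ := fe_inj.mp h; omega
      have n3 : fe 0 (2*k+5) ≠ fe (2*k+2) 1 := fun h => by
        obtain ⟨h1, h2⟩ := fe_inj.mp h; omega
      have n4 : fe (2*k+4) 0 ≠ fe (2*k+2) 1 := fun h => by
        obtain ⟨h1, h2⟩ := fe_inj.mp h; omega
      have n5 : fe (k+3) (k+2) ≠ fe (2*k+2) 1 := fun h => by
        obtain ⟨h1, h2⟩ := fe_inj.mp h; omega
      rw [hA']
      simp [coeff_add, coeff_monomial, n2, n3, n4, n5]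
    · intro d hd
      by_contra hlt
      push_neg at hlt
      apply hd
      have key : ∀ a b : ℕ, 2 * k + 3 ≤ a + b → fe a b ≠ d := by
        intro a b hab h
        rw [← h, fe_sum] at hlt
        omega
      have n1 := key (2*k+2) 1 (by omega)
      have n2 := key (k+1) (k+3) (by omega)
      have n3 := key 0 (2*k+5) (by omega)
      have n4 := key (2*k+4) 0 (by omega)
      have n5 := key (k+3) (k+2) (by omega)
      rw [hA']
      simp [coeff_add, coeff_monomial, n1, n2, n3, n4, n5]
  rw [hordA, hordB]
  omega
end

section
/- Let n ≥ 2 be an integer. In the affine chart x = 1, set f = y(y^(n-1) + z^n) and g = z(y^(n-1) + z^n) + y^(n+1) in ℂ[y,z], and let A = g·∂f/∂y − f·∂g/∂y and B = g·∂f/∂z − f·∂g/∂z. Then the Milnor number of the foliation at the origin equals (2n)² + 2n + 1; that is, dim_ℂ ℂ[[y,z]]/(A, B) = 4n² + 2n + 1, where (A,B) is the ideal generated by A and B viewed as formal power series. -/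
/-!
Write `y = X 0`, `z = X 1` and `C = (y^(n-1) + z^n)^2 - n y^(n+1) z^(n-1)`. A direct
computation gives `A = z C - y^(2n)` and `B = -y C`, while `C ≡ z^(2n)` and `A ≡ z^(2n+1)`
modulo `y`; hence `y` is a nonzerodivisor modulo `A` and modulo `C`. Whenever `w` is regular
modulo `u`, multiplication by `w` gives an exact sequence
`0 → R/(u, v) → R/(u, w v) → R/(u, w) → 0`, so `ℂ`-lengths add (lengths need no finiteness
hypothesis and agree with dimensions once finite):
`ℓ(R/(A, y C)) = ℓ(R/(A, C)) + ℓ(R/(A, y)) = ℓ(R/(C, y^(2n))) + ℓ(R/(y, z^(2n+1)))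
= 2n · 2n + (2n + 1)`.
-/

namespace Ideal

variable {K R : Type*} [CommRing K] [CommRing R] [Algebra K R]

theorem length_quotient_span_pair_mul {u w : R} (hw : IsSMulRegular (R ⧸ span {u}) w) (v : R) :
    Module.length K (R ⧸ span {u, w * v}) =
      Module.length K (R ⧸ span {u, v}) + Module.length K (R ⧸ span {u, w}) := by
  have hmul : span {u, v} ≤ Submodule.comap (LinearMap.mulLeft R w) (span {u, w * v}) := by
    rw [span_le, Set.insert_subset_iff, Set.singleton_subset_iff]
    exact ⟨mul_mem_left _ _ (subset_span (by simp)), subset_span (by simp)⟩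
  have hfactor : span {u, w * v} ≤ span {u, w} := by
    rw [span_le, Set.insert_subset_iff, Set.singleton_subset_iff]
    exact ⟨subset_span (by simp), mul_mem_right _ _ (subset_span (by simp))⟩
  let f := (Submodule.mapQ _ _ (LinearMap.mulLeft R w) hmul).restrictScalars K
  let g := (Quotient.factorₐ K hfactor).toLinearMap
  refine Module.length_eq_add_of_exact f g ?_ (Quotient.factor_surjective hfactor) ?_
  · rw [← LinearMap.ker_eq_bot, LinearMap.ker_eq_bot']
    rintro ⟨r⟩ hr
    obtain ⟨a, b, hab⟩ := mem_span_pair.mp ((Submodule.Quotient.mk_eq_zero _).mp hr)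
    rw [LinearMap.mulLeft_apply] at hab
    have hrv : r - b * v ∈ span {u} :=
      (isSMulRegular_quotient_iff_mem_of_smul_mem _ w).mp hw _
        (mem_span_singleton'.mpr ⟨a, by rw [smul_eq_mul]; linear_combination hab⟩)
    obtain ⟨c, hc⟩ := mem_span_singleton'.mp hrv
    exact (Submodule.Quotient.mk_eq_zero _).mpr
      (mem_span_pair.mpr ⟨c, b, by linear_combination hc⟩)
  · rintro ⟨r⟩
    change Quotient.mk _ r = 0 ↔ _
    rw [Quotient.eq_zero_iff_mem, mem_span_pair]
    constructor
    · rintro ⟨a, b, rfl⟩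
      refine ⟨Quotient.mk _ b, Quotient.eq.mpr (mem_span_pair.mpr ⟨-a, 0, ?_⟩)⟩
      rw [LinearMap.mulLeft_apply]
      ring
    · rintro ⟨⟨s⟩, hs⟩
      obtain ⟨c, d, hcd⟩ := mem_span_pair.mp (Quotient.eq.mp hs)
      rw [LinearMap.mulLeft_apply] at hcd
      exact ⟨-c, s - d * v, by linear_combination -hcd⟩

theorem length_quotient_span_pair_pow {u w : R} (hw : IsSMulRegular (R ⧸ span {u}) w) (k : ℕ) :
    Module.length K (R ⧸ span {u, w ^ k}) = k * Module.length K (R ⧸ span {u, w}) := by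
  induction k with
  | zero =>
    rw [pow_zero, span_insert, span_singleton_one, sup_top_eq, Nat.cast_zero, zero_mul]
    exact Module.length_eq_zero
  | succ k ih =>
    rw [pow_succ', length_quotient_span_pair_mul hw, ih, Nat.cast_succ, add_one_mul]

end Ideal

theorem Module.finrank_eq_of_length_eq {K M : Type*} [DivisionRing K] [AddCommGroup M]
    [Module K M] {n : ℕ} (h : Module.length K M = n) : Module.finrank K M = n := by
  rw [Module.length_eq_rank, Cardinal.toENat_eq_natCast] at h
  exact Module.finrank_eq_of_rank_eq h

namespace MvPolynomial

variable {σ R : Type*} [CommRing R]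

@[simp, norm_cast]
theorem coe_neg (φ : MvPolynomial σ R) : ((-φ : MvPolynomial σ R) : MvPowerSeries σ R) = -φ :=
  map_neg coeToMvPowerSeries.ringHom φ

@[simp, norm_cast]
theorem coe_sub (φ ψ : MvPolynomial σ R) :
    ((φ - ψ : MvPolynomial σ R) : MvPowerSeries σ R) = φ - ψ :=
  map_sub coeToMvPowerSeries.ringHom φ ψ

end MvPolynomial

namespace MvPowerSeries

open Ideal

variable {σ R : Type*}

theorem X_ne_zero [Semiring R] [Nontrivial R] (i : σ) : (X i : MvPowerSeries σ R) ≠ 0 := by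
  classical
  intro h
  simpa using congrArg (coeff (Finsupp.single i 1)) h

theorem X_dvd_of_X_dvd_mul_X_pow [CommSemiring R] {i j : σ} (hij : i ≠ j)
    {c : MvPowerSeries σ R} {N : ℕ} (h : X i ∣ c * X j ^ N) : X i ∣ c := by
  classical
  rw [X_dvd_iff] at h ⊢
  intro e he
  have := h (e + Finsupp.single j N) (by simp [he, hij.symm])
  rwa [X_pow_eq, coeff_add_mul_monomial, mul_one] at this

theorem isSMulRegular_X_of_X_dvd_sub_X_pow [CommRing R] [IsDomain R] {i j : σ} (hij : i ≠ j)
    {a : MvPowerSeries σ R} {N : ℕ} (ha : X i ∣ a - X j ^ N) :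
    IsSMulRegular (MvPowerSeries σ R ⧸ span {a}) (X i : MvPowerSeries σ R) := by
  rw [isSMulRegular_quotient_iff_mem_of_smul_mem]
  intro r hr
  obtain ⟨c, hc⟩ := mem_span_singleton'.mp hr
  rw [smul_eq_mul] at hc
  obtain ⟨b, hb⟩ := ha
  obtain ⟨d, rfl⟩ : X i ∣ c :=
    X_dvd_of_X_dvd_mul_X_pow hij ⟨r - c * b, by linear_combination hc - c * hb⟩
  exact mem_span_singleton'.mpr ⟨d, mul_left_cancel₀ (X_ne_zero i) (by linear_combination hc)⟩

theorem span_X_zero_X_one_eq_ker_constantCoeff [CommRing R] :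
    span {X 0, X 1} = RingHom.ker (constantCoeff (σ := Fin 2) (R := R)) := by
  refine le_antisymm (by simp [span_le, Set.insert_subset_iff]) fun F hF => ?_
  let F₀ : MvPowerSeries (Fin 2) R := fun e => if e 0 = 0 then coeff e F else 0
  have hF₀ (e : Fin 2 →₀ ℕ) : coeff e F₀ = if e 0 = 0 then coeff e F else 0 := rfl
  obtain ⟨G, hG⟩ : X 0 ∣ F - F₀ := X_dvd_iff.mpr fun e he => by
    rw [map_sub, hF₀, if_pos he, sub_self]
  obtain ⟨H, hH⟩ : X 1 ∣ F₀ := X_dvd_iff.mpr fun e he => by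
    rw [hF₀]
    split_ifs with h0
    · have : e = 0 := by ext a; fin_cases a <;> simp [h0, he]
      rwa [this, coeff_zero_eq_constantCoeff_apply]
    · rfl
  rw [← sub_add_cancel F F₀]
  exact mem_span_pair.mpr ⟨G, H, by rw [hG, hH]; ring⟩

variable {K : Type*} [Field K]

theorem length_quotient_span_X_zero_X_one :
    Module.length K
      (MvPowerSeries (Fin 2) K ⧸ span {(X 0 : MvPowerSeries (Fin 2) K), X 1}) = 1 := by
  have hsurj : Function.Surjective (constantCoeff (σ := Fin 2) (R := K)) :=
    fun k => ⟨C k, constantCoeff_C k⟩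
  let e : (MvPowerSeries (Fin 2) K ⧸ RingHom.ker (constantCoeff (σ := Fin 2) (R := K)))
      ≃ₐ[K] K :=
    AlgEquiv.ofRingEquiv (f := RingHom.quotientKerEquivOfSurjective hsurj) fun _ => rfl
  rw [span_X_zero_X_one_eq_ker_constantCoeff, e.toLinearEquiv.length_eq,
    Module.length_eq_finrank, Module.finrank_self, Nat.cast_one]

theorem length_quotient_span_X_zero_X_one_pow (N : ℕ) :
    Module.length K
      (MvPowerSeries (Fin 2) K ⧸ span {(X 0 : MvPowerSeries (Fin 2) K), X 1 ^ N}) = N := by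
  have hX₁ := isSMulRegular_X_of_X_dvd_sub_X_pow (σ := Fin 2) (R := K) (a := X 0) (N := 1)
    one_ne_zero (by simp)
  rw [length_quotient_span_pair_pow hX₁, length_quotient_span_X_zero_X_one, mul_one]

theorem length_quotient_span_X_zero_pow_of_X_dvd_sub {a : MvPowerSeries (Fin 2) K} {N : ℕ}
    (ha : X 0 ∣ a - X 1 ^ N) (k : ℕ) :
    Module.length K (MvPowerSeries (Fin 2) K ⧸ span {a, X 0 ^ k}) = (k * N : ℕ) := by
  have hspan : span {a, X 0} = span {X 0, X 1 ^ N} := by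
    obtain ⟨b, hb⟩ := ha
    rw [show a = X 1 ^ N + b * X 0 by linear_combination hb, span_pair_add_mul_right,
      span_pair_comm]
  have hX₀ := isSMulRegular_X_of_X_dvd_sub_X_pow zero_ne_one ha
  rw [length_quotient_span_pair_pow hX₀, hspan, length_quotient_span_X_zero_X_one_pow,
    Nat.cast_mul]

theorem length_quotient_span_X_one_mul_sub_X_zero_pow_X_zero_mul {c : MvPowerSeries (Fin 2) K}
    {M N : ℕ} (hM : M ≠ 0) (hc : X 0 ∣ c - X 1 ^ N) :
    Module.length K (MvPowerSeries (Fin 2) K ⧸ span {X 1 * c - X 0 ^ M, X 0 * c}) =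
      (M * N + (N + 1) : ℕ) := by
  have ha : X 0 ∣ X 1 * c - X 0 ^ M - X 1 ^ (N + 1) := by
    rw [show X 1 * c - X 0 ^ M - X 1 ^ (N + 1) = X 1 * (c - X 1 ^ N) - X 0 ^ M by ring]
    exact dvd_sub (hc.mul_left _) (dvd_pow_self _ hM)
  have hspan : span {X 1 * c - X 0 ^ M, c} = span {c, X 0 ^ M} := by
    rw [sub_eq_neg_add, span_pair_add_mul_right, span_insert_neg, span_pair_comm]
  have hlen := length_quotient_span_X_zero_pow_of_X_dvd_sub ha 1
  rw [pow_one] at hlen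
  have hX₀ := isSMulRegular_X_of_X_dvd_sub_X_pow zero_ne_one ha
  rw [length_quotient_span_pair_mul hX₀, hspan, length_quotient_span_X_zero_pow_of_X_dvd_sub hc,
    hlen, one_mul, ← Nat.cast_add]

end MvPowerSeries

open MvPolynomial

/-- In the chart `x = 1`, with `f = y(y^(n-1) + z^n)`, `g = z(y^(n-1) + z^n) + y^(n+1)`,
the Milnor number at the origin of the foliation defined by
`A dy + B dz`, `A = g·f_y − f·g_y`, `B = g·f_z − f·g_z`, equals `(2n)² + 2n + 1`:
`dim_ℂ ℂ[[y,z]]/(A,B) = 4n² + 2n + 1`. -/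
theorem stmt_3 (n : ℕ) (hn : 2 ≤ n)
    (f g A B : MvPolynomial (Fin 2) ℂ)
    (hf : f = X 0 * (X 0 ^ (n - 1) + X 1 ^ n))
    (hg : g = X 1 * (X 0 ^ (n - 1) + X 1 ^ n) + X 0 ^ (n + 1))
    (hA : A = g * pderiv 0 f - f * pderiv 0 g)
    (hB : B = g * pderiv 1 f - f * pderiv 1 g) :
    Module.finrank ℂ
      (MvPowerSeries (Fin 2) ℂ ⧸
        Ideal.span {(A : MvPowerSeries (Fin 2) ℂ), (B : MvPowerSeries (Fin 2) ℂ)}) =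
      4 * n ^ 2 + 2 * n + 1 := by
  obtain ⟨m, rfl⟩ : ∃ m, n = m + 2 := ⟨n - 2, by omega⟩
  set C : MvPolynomial (Fin 2) ℂ := (X 0 ^ (m + 1) + X 1 ^ (m + 2)) ^ 2 -
    ((m + 2 : ℕ) : MvPolynomial (Fin 2) ℂ) * X 0 ^ (m + 3) * X 1 ^ (m + 1)
  obtain ⟨hAC, hBC⟩ : A = X 1 * C - X 0 ^ (2 * (m + 2)) ∧ B = -(X 0 * C) := by
    subst hA hB hf hg
    constructor <;>
    · simp only [C, Nat.add_one_sub_one, add_tsub_cancel_right, Derivation.leibniz,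
        Derivation.leibniz_pow, map_add, pderiv_X, Pi.single_eq_same, Pi.single_eq_of_ne,
        one_ne_zero, zero_ne_one, ne_eq, not_false_eq_true, smul_eq_mul, nsmul_eq_mul,
        Nat.cast_add, Nat.cast_one, Nat.cast_ofNat]
      ring
  have hC : X 0 ∣ C - X 1 ^ (2 * (m + 2)) :=
    ⟨X 0 ^ (2 * m + 1) + 2 * X 0 ^ m * X 1 ^ (m + 2) -
      ((m + 2 : ℕ) : MvPolynomial (Fin 2) ℂ) * X 0 ^ (m + 2) * X 1 ^ (m + 1),
      by simp only [C]; ring⟩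
  set c : MvPowerSeries (Fin 2) ℂ := ↑C
  have hc : MvPowerSeries.X 0 ∣ c - MvPowerSeries.X 1 ^ (2 * (m + 2)) := by
    simpa using map_dvd coeToMvPowerSeries.ringHom hC
  have hA' : (A : MvPowerSeries (Fin 2) ℂ) =
      MvPowerSeries.X 1 * c - MvPowerSeries.X 0 ^ (2 * (m + 2)) := by
    simp [hAC, c]
  have hB' : (B : MvPowerSeries (Fin 2) ℂ) = -(MvPowerSeries.X 0 * c) := by
    simp [hBC, c]
  rw [hA', hB', Ideal.span_pair_neg, Module.finrank_eq_of_length_eq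
    (MvPowerSeries.length_quotient_span_X_one_mul_sub_X_zero_pow_X_zero_mul (by omega) hc)]
  ring
end

section
/- Let k ≥ 1 be an integer, d = 2k+1, and α, β ∈ ℂ \ {0}. Consider the homogeneous vector field X = P ∂/∂x + Q ∂/∂y + R ∂/∂z with P = α·y^d, Q = β·x^k·y·z^k − β²·z^d, R = x^(d-1)·y − β·x^k·z^(k+1), and the associated projective 1-form with coefficients A = yR − zQ, B = zP − xR, C = xQ − yP. Then for every (x,y,z) ∈ ℂ³ \ {0} with A(x,y,z) = B(x,y,z) = C(x,y,z) = 0, one has y = 0 and z = 0; i.e., the foliation defined by X has (1:0:0) as its unique singular point. -/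
open MvPolynomial

/-- For `d = 2k+1` and `α, β ≠ 0`, the foliation defined by the vector field
`X = α y^d ∂x + (β x^k y z^k − β² z^d) ∂y + (x^(d-1) y − β x^k z^(k+1)) ∂z`
has `(1:0:0)` as its unique singular point. -/
theorem stmt_4 (k d : ℕ) (hk : 1 ≤ k) (hd : d = 2 * k + 1)
    (α β : ℂ) (hα : α ≠ 0) (hβ : β ≠ 0)
    (P Q R A B C' : MvPolynomial (Fin 3) ℂ)
    (hP : P = C α * X 1 ^ d)
    (hQ : Q = C β * X 0 ^ k * X 1 * X 2 ^ k - C (β ^ 2) * X 2 ^ d)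
    (hR : R = X 0 ^ (d - 1) * X 1 - C β * X 0 ^ k * X 2 ^ (k + 1))
    (hA : A = X 1 * R - X 2 * Q)
    (hB : B = X 2 * P - X 0 * R)
    (hC : C' = X 0 * Q - X 1 * P) :
    ∀ v : Fin 3 → ℂ, v ≠ 0 →
      eval v A = 0 → eval v B = 0 → eval v C' = 0 →
      v 1 = 0 ∧ v 2 = 0 := by
  subst hd hP hQ hR hA hB hC
  intro v hv h1 h2 h3
  simp only [map_sub, map_mul, map_pow, eval_C, eval_X, Nat.add_sub_cancel] at h1 h2 h3
  set x := v 0 with hx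
  set y := v 1 with hy
  set z := v 2 with hz
  have key : (x ^ k * y - β * z ^ (k + 1)) ^ 2 = 0 := by
    rw [← h1]; ring
  have hrel : x ^ k * y = β * z ^ (k + 1) := by
    have := (pow_eq_zero_iff two_ne_zero).mp key
    exact sub_eq_zero.mp this
  have h4 : α * y ^ (2 * k + 1) * y =
      β * x * (x ^ k * y) * z ^ k - β ^ 2 * x * z ^ (2 * k + 1) := by
    linear_combination -h3
  rw [hrel] at h4
  have h5 : α * y ^ (2 * k + 2) = 0 := by linear_combination h4
  have hy0 : y = 0 := by
    have := (mul_eq_zero.mp h5).resolve_left hα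
    exact pow_eq_zero_iff (by omega) |>.mp this
  refine ⟨hy0, ?_⟩
  rw [hy0, mul_zero] at hrel
  have : z ^ (k + 1) = 0 := by
    rcases mul_eq_zero.mp hrel.symm with h | h
    · exact absurd h hβ
    · exact h
  exact pow_eq_zero_iff (by omega) |>.mp this
end

section
/- Let d ≥ 1 and a₀, …, a_d ∈ ℂ with a_d ≠ 0. Set P = Σ_{i=0}^{d} a_i·y^i·z^(d−i) ∈ ℂ[x,y,z] and consider the vector field X = P ∂/∂x + z^d ∂/∂y. Let G = Σ_{i=0}^{d} (a_i/(i+1))·y^(i+1)·z^(d−i) − x·z^d. Then: (i) P·∂G/∂x + z^d·∂G/∂y = 0 and P·∂(z^(d+1))/∂x + z^d·∂(z^(d+1))/∂y = 0, so the degree-(d+1) pencil {α·G − β·z^(d+1)} gives a rational first integral G/z^(d+1) of X; and (ii) the associated projective 1-form, with coefficients A = −z^(d+1), B = z·P, C = x·z^d − y·P, has a unique singular point: for every (x,y,z) ∈ ℂ³ \ {0} with A = B = C = 0 at (x,y,z), one has y = 0 and z = 0. -/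
open MvPolynomial

/-- For `P = Σ aᵢ yⁱ z^(d−i)` with `a_d ≠ 0` and the vector field `X = P ∂x + z^d ∂y`:
(i) `G = Σ (aᵢ/(i+1)) y^(i+1) z^(d−i) − x z^d` and `z^(d+1)` are both annihilated by `X`,
so `G / z^(d+1)` is a rational first integral of degree `d+1`; and
(ii) the associated projective 1-form, with coefficients `A = −z^(d+1)`, `B = z·P`,
`C = x z^d − y P`, has `(1:0:0)` as its unique singular point. -/
theorem stmt_6 (d : ℕ) (hd : 1 ≤ d) (a : ℕ → ℂ) (had : a d ≠ 0)
    (P G A B C' : MvPolynomial (Fin 3) ℂ)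
    (hP : P = ∑ i ∈ Finset.range (d + 1), C (a i) * X 1 ^ i * X 2 ^ (d - i))
    (hG : G = (∑ i ∈ Finset.range (d + 1),
        C (a i / ((i : ℂ) + 1)) * X 1 ^ (i + 1) * X 2 ^ (d - i)) - X 0 * X 2 ^ d)
    (hA : A = -(X 2 ^ (d + 1)))
    (hB : B = X 2 * P)
    (hC : C' = X 0 * X 2 ^ d - X 1 * P) :
    (P * pderiv 0 G + X 2 ^ d * pderiv 1 G = 0 ∧
     P * pderiv 0 (X 2 ^ (d + 1)) + X 2 ^ d * pderiv 1 (X 2 ^ (d + 1)) = 0) ∧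
    (∀ v : Fin 3 → ℂ, v ≠ 0 →
      eval v A = 0 → eval v B = 0 → eval v C' = 0 →
      v 1 = 0 ∧ v 2 = 0) := by
  have h0 : pderiv 0 G = -(X 2 ^ d) := by
    simp [hG, map_sum, pderiv_mul, pderiv_X]
  have h1 : pderiv (1 : Fin 3) G = P := by
    rw [hG, hP, map_sub, map_sum]
    have : ∀ i ∈ Finset.range (d + 1),
        pderiv (1 : Fin 3) (C (a i / ((i : ℂ) + 1)) * X 1 ^ (i + 1) * X 2 ^ (d - i))
          = C (a i) * X 1 ^ i * X 2 ^ (d - i) := by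
      intro i _
      have hne : ((i : ℂ) + 1) ≠ 0 := Nat.cast_add_one_ne_zero i
      have hC1 : ((i : MvPolynomial (Fin 3) ℂ) + 1) = C ((i : ℂ) + 1) := by
        rw [map_add, map_one, map_natCast]
      simp only [pderiv_mul, pderiv_X, pderiv_C]
      simp
      rw [hC1, show C (a i / ((i : ℂ) + 1)) * (C ((i : ℂ) + 1) * X 1 ^ i)
          = C (a i / ((i : ℂ) + 1) * ((i : ℂ) + 1)) * (X 1 ^ i : MvPolynomial (Fin 3) ℂ) by
            rw [C_mul]; ring,
        div_mul_cancel₀ _ hne]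
    rw [Finset.sum_congr rfl this]
    simp [pderiv_mul, pderiv_X]
  refine ⟨⟨by rw [h0, h1]; ring, by simp [pderiv_X]⟩, ?_⟩
  intro v hv hvA hvB hvC
  have hz : v 2 = 0 := by
    simpa [hA, pow_eq_zero_iff] using hvA
  have hPval : eval v P = a d * v 1 ^ d := by
    rw [hP, map_sum, Finset.sum_eq_single d]
    · simp
    · intro i hi hne
      have : 0 < d - i := Nat.sub_pos_of_lt (lt_of_le_of_ne (Nat.lt_succ_iff.mp (Finset.mem_range.mp hi)) hne)
      simp [hz, zero_pow this.ne']
    · simp [Finset.mem_range]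
  have hy : v 1 = 0 := by
    have := hvC
    rw [hC] at this
    simp [hz, hPval, zero_pow (Nat.one_le_iff_ne_zero.mp hd)] at this
    rcases this with h | h | h
    · exact h
    · exact absurd h had
    · exact h.1
  exact ⟨hy, hz⟩
end

section
/- Let n ≥ 1 and n₁, n₂, n₃ ≥ 1 be integers with n₁ + n₂ + n₃ = 4n and each nᵢ relatively prime to n. In ℂ[x,y,z] set f = x·z·y·(z−y) + z⁴ + y⁴, F = f^n, G = z^(n₁)·y^(n₂)·(z−y)^(n₃), and define the 1-form Θ = n·z·y·(z−y)·df − f·(n₁·y·(z−y) dz + n₂·z·(z−y) dy + n₃·z·y·(dz − dy)). Then: (i) the componentwise identity G·dF − F·dG = f^(n−1)·z^(n₁−1)·y^(n₂−1)·(z−y)^(n₃−1)·Θ holds; and (ii) every (x,y,z) ∈ ℂ³ \ {0} at which all three coefficients of Θ vanish satisfies y = 0 and z = 0 — i.e., the degree-5 foliation defined by Θ has a unique singular point, and it admits the rational first integral F/G of degree 4n. -/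
open MvPolynomial

/-- With `f = xzy(z−y) + z⁴ + y⁴`, `F = f^n`, `G = z^{n₁} y^{n₂} (z−y)^{n₃}`
(`n₁+n₂+n₃ = 4n`, each `nᵢ` coprime to `n`), and
`Θ = n·z·y·(z−y)·df − f·(n₁ y(z−y) dz + n₂ z(z−y) dy + n₃ z y (dz − dy))`:
(i) `G·dF − F·dG = f^{n−1} z^{n₁−1} y^{n₂−1} (z−y)^{n₃−1} · Θ` componentwise; and
(ii) every nonzero common zero of the coefficients of `Θ` satisfies `y = 0` and `z = 0`,
so the degree-5 foliation defined by `Θ` has a unique singular point and a rational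
first integral `F/G` of degree `4n`. -/
theorem stmt_8 (n n₁ n₂ n₃ : ℕ) (hn : 1 ≤ n) (h₁ : 1 ≤ n₁) (h₂ : 1 ≤ n₂) (h₃ : 1 ≤ n₃)
    (hsum : n₁ + n₂ + n₃ = 4 * n)
    (hc₁ : Nat.Coprime n₁ n) (hc₂ : Nat.Coprime n₂ n) (hc₃ : Nat.Coprime n₃ n)
    (f F G ΘA ΘB ΘC : MvPolynomial (Fin 3) ℂ)
    (hf : f = X 0 * X 2 * X 1 * (X 2 - X 1) + X 2 ^ 4 + X 1 ^ 4)
    (hF : F = f ^ n)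
    (hG : G = X 2 ^ n₁ * X 1 ^ n₂ * (X 2 - X 1) ^ n₃)
    (hΘA : ΘA = C (n : ℂ) * X 2 * X 1 * (X 2 - X 1) * pderiv 0 f)
    (hΘB : ΘB = C (n : ℂ) * X 2 * X 1 * (X 2 - X 1) * pderiv 1 f -
        f * (C (n₂ : ℂ) * X 2 * (X 2 - X 1) - C (n₃ : ℂ) * X 2 * X 1))
    (hΘC : ΘC = C (n : ℂ) * X 2 * X 1 * (X 2 - X 1) * pderiv 2 f -
        f * (C (n₁ : ℂ) * X 1 * (X 2 - X 1) + C (n₃ : ℂ) * X 2 * X 1)) :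
    (G * pderiv 0 F - F * pderiv 0 G =
        f ^ (n - 1) * X 2 ^ (n₁ - 1) * X 1 ^ (n₂ - 1) * (X 2 - X 1) ^ (n₃ - 1) * ΘA ∧
     G * pderiv 1 F - F * pderiv 1 G =
        f ^ (n - 1) * X 2 ^ (n₁ - 1) * X 1 ^ (n₂ - 1) * (X 2 - X 1) ^ (n₃ - 1) * ΘB ∧
     G * pderiv 2 F - F * pderiv 2 G =
        f ^ (n - 1) * X 2 ^ (n₁ - 1) * X 1 ^ (n₂ - 1) * (X 2 - X 1) ^ (n₃ - 1) * ΘC) ∧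
    (∀ v : Fin 3 → ℂ, v ≠ 0 →
      eval v ΘA = 0 → eval v ΘB = 0 → eval v ΘC = 0 →
      v 1 = 0 ∧ v 2 = 0) := by
  obtain ⟨m, rfl⟩ : ∃ m, n = m + 1 := ⟨n - 1, by omega⟩
  obtain ⟨a, rfl⟩ : ∃ a, n₁ = a + 1 := ⟨n₁ - 1, by omega⟩
  obtain ⟨b, rfl⟩ : ∃ b, n₂ = b + 1 := ⟨n₂ - 1, by omega⟩
  obtain ⟨c, rfl⟩ : ∃ c, n₃ = c + 1 := ⟨n₃ - 1, by omega⟩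
  simp only [Nat.add_sub_cancel]
  constructor
  · subst hF hG hΘA hΘB hΘC
    refine ⟨?_, ?_, ?_⟩ <;>
    · simp only [pderiv_pow, pderiv_mul, map_sub, pderiv_X, Nat.add_sub_cancel,
        Pi.single_eq_same, Pi.single_eq_of_ne (by decide : (1:Fin 3) ≠ 0),
        Pi.single_eq_of_ne (by decide : (2:Fin 3) ≠ 0),
        Pi.single_eq_of_ne (by decide : (0:Fin 3) ≠ 1),
        Pi.single_eq_of_ne (by decide : (2:Fin 3) ≠ 1),
        Pi.single_eq_of_ne (by decide : (0:Fin 3) ≠ 2),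
        Pi.single_eq_of_ne (by decide : (1:Fin 3) ≠ 2)]
      push_cast [← C_eq_coe_nat]
      simp only [map_add, map_one]
      ring
  · intro v hv hA hB hC
    subst hΘA hΘB hΘC hf
    simp only [pderiv_pow, pderiv_mul, map_add, map_sub, pderiv_X,
        Pi.single_eq_same, Pi.single_eq_of_ne (by decide : (1:Fin 3) ≠ 0),
        Pi.single_eq_of_ne (by decide : (2:Fin 3) ≠ 0),
        Pi.single_eq_of_ne (by decide : (0:Fin 3) ≠ 1),
        Pi.single_eq_of_ne (by decide : (2:Fin 3) ≠ 1),
        Pi.single_eq_of_ne (by decide : (0:Fin 3) ≠ 2),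
        Pi.single_eq_of_ne (by decide : (1:Fin 3) ≠ 2),
        eval_mul, eval_add, eval_sub, eval_pow, eval_C, eval_X, map_one, map_zero,
        map_natCast, Nat.cast_add, Nat.cast_one] at hA hB hC
    norm_num at hA hB hC
    set x := v 0; set y := v 1; set z := v 2
    have hnn : ((m:ℂ) + 1) ≠ 0 := by exact_mod_cast (Nat.cast_ne_zero (R := ℂ)).mpr (Nat.succ_ne_zero m)
    have key : z = 0 ∨ y = 0 ∨ z - y = 0 := by tauto
    rcases key with hz | hy | hzy
    · -- z = 0 : use hC to get y = 0
        have h6 : ((a:ℂ)+1) * y ^ 6 = 0 := by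
          rw [hz] at hC; linear_combination hC
        have hy : y = 0 := by
          rcases mul_eq_zero.mp h6 with h | h
          · exact absurd h (by exact_mod_cast (Nat.cast_ne_zero (R := ℂ)).mpr (Nat.succ_ne_zero a))
          · exact pow_eq_zero_iff (by norm_num) |>.mp h
        exact ⟨hy, hz⟩
    · -- y = 0 : use hB to get z = 0
      have h6 : ((b:ℂ)+1) * z ^ 6 = 0 := by
        rw [hy] at hB; linear_combination -hB
      have hz : z = 0 := by
        rcases mul_eq_zero.mp h6 with h | h
        · exact absurd h (by exact_mod_cast (Nat.cast_ne_zero (R := ℂ)).mpr (Nat.succ_ne_zero b))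
        · exact pow_eq_zero_iff (by norm_num) |>.mp h
      exact ⟨hy, hz⟩
    · -- z = y
      have h6 : 2 * ((c:ℂ)+1) * y ^ 6 = 0 := by
        rw [sub_eq_zero.mp hzy] at hB; linear_combination hB
      have hy : y = 0 := by
        rcases mul_eq_zero.mp h6 with h | h
        · rcases mul_eq_zero.mp h with h | h
          · norm_num at h
          · exact absurd h (by exact_mod_cast (Nat.cast_ne_zero (R := ℂ)).mpr (Nat.succ_ne_zero c))
        · exact pow_eq_zero_iff (by norm_num) |>.mp h
      exact ⟨hy, by rw [sub_eq_zero.mp hzy, hy]⟩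
end

section
/- Let a₂, a₁, a₀ ∈ ℂ and set P = y³ + a₂·y²z + a₁·yz² + a₀·z³ ∈ ℂ[y,z]. Consider the local 1-form of the stratum S₉ (with parameters a = b = 1): ω = A dy + B dz with A = z·(z² + P) and B = z³ − y·(z² + P). Then there exist c₁, c₂, c₃ ∈ ℂ such that the cuspidal cubic f = z² + y³ + c₁·y²z + c₂·yz² + c₃·z³ is an invariant algebraic curve of ω, i.e., f divides A·∂f/∂z − B·∂f/∂y in ℂ[y,z]. (In particular, the weak separatrix of the saddle-node appearing in the reduction of singularities of this foliation is convergent and algebraic.) -/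
set_option maxHeartbeats 2000000


open MvPolynomial

lemma pd0_aux (c₁ c₂ c₃ : ℂ) :
    pderiv 0 (X 1 ^ 2 + X 0 ^ 3 + C c₁ * X 0 ^ 2 * X 1 + C c₂ * X 0 * X 1 ^ 2 +
      C c₃ * X 1 ^ 3 : MvPolynomial (Fin 2) ℂ) =
    3 * X 0 ^ 2 + C c₁ * (2 * X 0) * X 1 + C c₂ * X 1 ^ 2 := by
  simp only [map_add, Derivation.leibniz, Derivation.leibniz_pow, pderiv_X, pderiv_C,
    Pi.single_eq_same, Pi.single_eq_of_ne (show (1 : Fin 2) ≠ 0 by decide),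
    smul_eq_mul, nsmul_eq_mul]
  push_cast
  ring

lemma pd1_aux (c₁ c₂ c₃ : ℂ) :
    pderiv 1 (X 1 ^ 2 + X 0 ^ 3 + C c₁ * X 0 ^ 2 * X 1 + C c₂ * X 0 * X 1 ^ 2 +
      C c₃ * X 1 ^ 3 : MvPolynomial (Fin 2) ℂ) =
    2 * X 1 + C c₁ * X 0 ^ 2 + C c₂ * X 0 * (2 * X 1) + C c₃ * (3 * X 1 ^ 2) := by
  simp only [map_add, Derivation.leibniz, Derivation.leibniz_pow, pderiv_X, pderiv_C,
    Pi.single_eq_same, Pi.single_eq_of_ne (show (0 : Fin 2) ≠ 1 by decide),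
    smul_eq_mul, nsmul_eq_mul]
  push_cast
  ring

/-- For the stratum `S₉` with parameters `a = b = 1`, i.e. the local 1-form
`ω = A dy + B dz` with `A = z(z² + P)`, `B = z³ − y(z² + P)`,
`P = y³ + a₂ y²z + a₁ yz² + a₀ z³`, there is an invariant cuspidal cubic
`f = z² + y³ + c₁ y²z + c₂ yz² + c₃ z³`, i.e. `f ∣ A·f_z − B·f_y`.
(Variables: `y = X 0`, `z = X 1`.) -/
theorem stmt_11 (a₂ a₁ a₀ : ℂ)
    (P A B : MvPolynomial (Fin 2) ℂ)
    (hP : P = X 0 ^ 3 + C a₂ * X 0 ^ 2 * X 1 + C a₁ * X 0 * X 1 ^ 2 + C a₀ * X 1 ^ 3)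
    (hA : A = X 1 * (X 1 ^ 2 + P))
    (hB : B = X 1 ^ 3 - X 0 * (X 1 ^ 2 + P)) :
    ∃ (c₁ c₂ c₃ : ℂ) (f : MvPolynomial (Fin 2) ℂ),
      f = X 1 ^ 2 + X 0 ^ 3 + C c₁ * X 0 ^ 2 * X 1 + C c₂ * X 0 * X 1 ^ 2 + C c₃ * X 1 ^ 3 ∧
      f ∣ (A * pderiv 1 f - B * pderiv 0 f) := by
  refine ⟨a₂ + 3, a₁ + 2 * a₂ + 6, a₀ + a₁ + 2 * a₂ + 6,
    X 1 ^ 2 + X 0 ^ 3 + C (a₂ + 3) * X 0 ^ 2 * X 1 + C (a₁ + 2 * a₂ + 6) * X 0 * X 1 ^ 2 +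
      C (a₀ + a₁ + 2 * a₂ + 6) * X 1 ^ 3, rfl, C 2 * X 1 ^ 2 + C 3 * P, ?_⟩
  subst hP hA hB
  rw [pd0_aux, pd1_aux]
  simp only [map_add, map_mul, map_ofNat, map_one]
  ring
end

section
/- Let k ≥ 1 be an integer, d = 2k+1, and α, β ∈ ℂ \ {0}. With P = α·y^d, Q = β·x^k·y·z^k − β²·z^d, R = x^(d−1)·y − β·x^k·z^(k+1), consider the coefficients A = yR − zQ, B = zP − xR, C = xQ − yP of the projective 1-form associated to the vector field X = P ∂/∂x + Q ∂/∂y + R ∂/∂z. Then any polynomial in ℂ[x,y,z] dividing A, B and C simultaneously is a nonzero constant; consequently the foliation defined by X has degree exactly d. -/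
open MvPolynomial

/-!
With `S = x^k y − β z^(k+1)` one has `A = S²` and `Q = β z^k S`, so `(xQ)² = β² x² z^(2k) A`.
Since `C' = xQ − α y^(d+1)`, a common divisor of `A` and `C'` divides
`(xQ)² − C' (xQ + α y^(d+1)) = α² y^(2d+2)`, hence is a constant times a power of the prime `y`.
That power is trivial because `y ∤ A`: at `(0, 0, 1)` the polynomial `A` takes the value `β² ≠ 0`.
-/

theorem dvd_sq_of_dvd_sq_of_dvd_sub {R : Type*} [CommRing R] {d a b : R}
    (ha : d ∣ a ^ 2) (hab : d ∣ a - b) : d ∣ b ^ 2 := by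
  have hb : b ^ 2 = a ^ 2 - (a - b) * (a + b) := by ring
  exact hb ▸ dvd_sub ha (hab.mul_right _)

namespace MvPolynomial

theorem eval_eq_zero_of_X_dvd {σ R : Type*} [CommSemiring R] {i : σ} {f : σ → R}
    {p : MvPolynomial σ R} (hf : f i = 0) (h : X i ∣ p) : eval f p = 0 := by
  obtain ⟨q, rfl⟩ := h
  simp [hf]

theorem exists_eq_C_of_dvd_X_pow_of_not_X_dvd {σ K : Type*} [Field K] {i : σ} {n : ℕ}
    {D : MvPolynomial σ K} (hD : D ∣ X i ^ n) (hX : ¬ X i ∣ D) :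
    ∃ c : K, c ≠ 0 ∧ D = C c := by
  obtain ⟨j, -, hj⟩ := (dvd_prime_pow X_prime n).mp hD
  obtain rfl : j = 0 := by
    by_contra hj0
    exact hX ((dvd_pow_self _ hj0).trans hj.symm.dvd)
  rw [pow_zero, associated_one_iff_isUnit, isUnit_iff_eq_C_of_isReduced] at hj
  obtain ⟨c, hc, rfl⟩ := hj
  exact ⟨c, hc.ne_zero, rfl⟩

end MvPolynomial

section Foliation

variable (k : ℕ) (β : ℂ)

theorem oneForm_A_eq_sq :
    X 1 * (X 0 ^ (2 * k) * X 1 - C β * X 0 ^ k * X 2 ^ (k + 1)) -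
        X 2 * (C β * X 0 ^ k * X 1 * X 2 ^ k - C (β ^ 2) * X 2 ^ (2 * k + 1)) =
      (X 0 ^ k * X 1 - C β * X 2 ^ (k + 1) : MvPolynomial (Fin 3) ℂ) ^ 2 := by
  simp only [C_pow]
  ring

theorem oneForm_Q_eq :
    (C β * X 0 ^ k * X 1 * X 2 ^ k - C (β ^ 2) * X 2 ^ (2 * k + 1) : MvPolynomial (Fin 3) ℂ) =
      C β * X 2 ^ k * (X 0 ^ k * X 1 - C β * X 2 ^ (k + 1)) := by
  simp only [C_pow]
  ring

end Foliation

theorem stmt_16_general (k d : ℕ) (hk : 1 ≤ k) (hd : d = 2 * k + 1)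
    (α β : ℂ) (hα : α ≠ 0) (hβ : β ≠ 0)
    (P Q R A B C' : MvPolynomial (Fin 3) ℂ)
    (hP : P = C α * X 1 ^ d)
    (hQ : Q = C β * X 0 ^ k * X 1 * X 2 ^ k - C (β ^ 2) * X 2 ^ d)
    (hR : R = X 0 ^ (d - 1) * X 1 - C β * X 0 ^ k * X 2 ^ (k + 1))
    (hA : A = X 1 * R - X 2 * Q)
    (hC : C' = X 0 * Q - X 1 * P) :
    ∀ D : MvPolynomial (Fin 3) ℂ, D ∣ A → D ∣ B → D ∣ C' →
      ∃ c : ℂ, c ≠ 0 ∧ D = MvPolynomial.C c := by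
  intro D hDA _ hDC
  subst hd
  set S : MvPolynomial (Fin 3) ℂ := X 0 ^ k * X 1 - C β * X 2 ^ (k + 1)
  have hAS : A = S ^ 2 := by rw [hA, hR, hQ, Nat.add_sub_cancel, oneForm_A_eq_sq]
  have hQS : Q = C β * X 2 ^ k * S := hQ.trans (oneForm_Q_eq k β)
  have hDxQ : D ∣ (X 0 * Q) ^ 2 := by
    have h : (X 0 * Q) ^ 2 = (X 0 * C β * X 2 ^ k) ^ 2 * A := by rw [hQS, hAS]; ring
    exact h ▸ hDA.mul_left _
  have hDX : D ∣ X 1 ^ (2 * (2 * k + 2)) := by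
    have h := dvd_sq_of_dvd_sq_of_dvd_sub hDxQ (hC ▸ hDC)
    have hyP : (X 1 * P) ^ 2 = C (α ^ 2) * X 1 ^ (2 * (2 * k + 2)) := by
      rw [hP, C_pow]; ring
    rwa [hyP, (isUnit_iff_ne_zero.mpr (pow_ne_zero 2 hα)).map C |>.dvd_mul_left] at h
  refine exists_eq_C_of_dvd_X_pow_of_not_X_dvd hDX fun hXD => hβ ?_
  have h := eval_eq_zero_of_X_dvd (f := ![0, 0, 1]) rfl (hXD.trans hDA)
  simpa [hAS, S, zero_pow (Nat.one_le_iff_ne_zero.mp hk)] using h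

/-- For `d = 2k+1`, `α, β ≠ 0`, the coefficients `A = yR − zQ`, `B = zP − xR`,
`C = xQ − yP` of the projective 1-form associated to the vector field
`X = α y^d ∂x + (β x^k y z^k − β² z^d) ∂y + (x^(d−1) y − β x^k z^(k+1)) ∂z`
have no common non-constant factor: any common divisor is a nonzero constant.
Consequently the foliation defined by `X` has degree exactly `d`. -/
theorem stmt_16 (k d : ℕ) (hk : 1 ≤ k) (hd : d = 2 * k + 1)
    (α β : ℂ) (hα : α ≠ 0) (hβ : β ≠ 0)
    (P Q R A B C' : MvPolynomial (Fin 3) ℂ)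
    (hP : P = C α * X 1 ^ d)
    (hQ : Q = C β * X 0 ^ k * X 1 * X 2 ^ k - C (β ^ 2) * X 2 ^ d)
    (hR : R = X 0 ^ (d - 1) * X 1 - C β * X 0 ^ k * X 2 ^ (k + 1))
    (hA : A = X 1 * R - X 2 * Q)
    (hB : B = X 2 * P - X 0 * R)
    (hC : C' = X 0 * Q - X 1 * P) :
    ∀ D : MvPolynomial (Fin 3) ℂ, D ∣ A → D ∣ B → D ∣ C' →
      ∃ c : ℂ, c ≠ 0 ∧ D = MvPolynomial.C c :=
  stmt_16_general k d hk hd α β hα hβ P Q R A B C' hP hQ hR hA hC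
end
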